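/- Let κ ∈ ℂ with -Im κ ≥ (α/(2√(α+1)))|Re κ| and α > 0. Then for every z, w ∈ ℂᴺ and u ∈ ℂ with u ≠ 0, Re[iκ(((α+2)/2)|u|^α |w|² + (α/2)|u|^{α-2}u² w̄·w̄)] ≥ (-(α+2)/2·Im κ - (α/2)|κ|)·|u|^α|w|² ≥ 0. -/

import Mathlib

/-!
Write `A = ((α+2)/2)|u|^α|w|²` (real) and `B = (α/2)|u|^{α-2}u² w̄·w̄`, so that
`|B| ≤ (α/2)|u|^α|w|²`. Then `Re(iκA) = -Im κ · A` and `Re(iκB) ≥ -|κ||B|`, which gives the first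
inequality. The coefficient is nonnegative because, after squaring, `α|κ| ≤ -(α+2) Im κ` reduces
to `α² (Re κ)² ≤ 4(α+1)(Im κ)²`, the square of the hypothesis on `κ`.
-/

open scoped ComplexConjugate

lemma norm_sum_conj_sq_le {ι : Type*} [Fintype ι] (w : ι → ℂ) :
    ‖∑ j, conj (w j) ^ 2‖ ≤ ∑ j, ‖w j‖ ^ 2 :=
  (norm_sum_le _ _).trans_eq <| by simp only [norm_pow, Complex.norm_conj]

lemma Real.rpow_sub_two_mul_sq {x α : ℝ} (hx : 0 ≤ x) (hα : α ≠ 0) :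
    x ^ (α - 2) * x ^ 2 = x ^ α := by
  rw [← Real.rpow_natCast x 2, ← Real.rpow_add' hx (by simpa using hα)]
  norm_num

lemma norm_rpow_sub_two_mul_sq_mul_sum_conj_sq_le {ι : Type*} [Fintype ι] {α : ℝ} (hα : 0 < α)
    (u : ℂ) (w : ι → ℂ) :
    ‖((α / 2 : ℝ) : ℂ) * ((‖u‖ ^ (α - 2) : ℝ) : ℂ) * u ^ 2 * ∑ j, conj (w j) ^ 2‖
      ≤ α / 2 * ‖u‖ ^ α * ∑ j, ‖w j‖ ^ 2 := by
  rw [norm_mul, norm_mul, norm_mul, Complex.norm_real, Complex.norm_real, norm_pow,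
    Real.norm_of_nonneg (by positivity), Real.norm_of_nonneg (by positivity),
    mul_assoc (α / 2), Real.rpow_sub_two_mul_sq (norm_nonneg u) hα.ne']
  gcongr
  exact norm_sum_conj_sq_le w

lemma Complex.neg_im_mul_sub_norm_mul_le_re_I_mul (κ B : ℂ) (A b : ℝ) (hB : ‖B‖ ≤ b) :
    -κ.im * A - ‖κ‖ * b ≤ (I * κ * (A + B)).re := by
  have hA : (I * κ * A).re = -κ.im * A := by simp [Complex.mul_re]
  have hB' : -(‖κ‖ * b) ≤ (I * κ * B).re := by
    have : ‖I * κ * B‖ ≤ ‖κ‖ * b := by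
      rw [norm_mul, norm_mul, Complex.norm_I, one_mul]
      gcongr
    linarith [Complex.abs_re_le_norm (I * κ * B), neg_abs_le (I * κ * B).re]
  rw [mul_add, Complex.add_re, hA]
  linarith

lemma mul_norm_le_of_abs_re_le {α : ℝ} (hα : 0 ≤ α) {κ : ℂ}
    (hκ : α / (2 * √(α + 1)) * |κ.re| ≤ -κ.im) :
    α * ‖κ‖ ≤ (α + 2) * -κ.im := by
  have hs : 0 < √(α + 1) := Real.sqrt_pos.2 (by linarith)
  have him : 0 ≤ -κ.im := le_trans (by positivity) hκ
  have hre : α * |κ.re| ≤ 2 * √(α + 1) * -κ.im := by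
    rwa [div_mul_eq_mul_div, div_le_iff₀ (by positivity), mul_comm (-κ.im)] at hκ
  have hre_sq : (α * κ.re) ^ 2 ≤ 4 * (α + 1) * κ.im ^ 2 := by
    have := pow_le_pow_left₀ (by positivity) hre 2
    rw [mul_pow, sq_abs, mul_pow, mul_pow, Real.sq_sqrt (by linarith), neg_sq] at this
    linarith
  have hnorm : ‖κ‖ ^ 2 = κ.re ^ 2 + κ.im ^ 2 := by
    rw [Complex.sq_norm, Complex.normSq_apply]; ring
  refine (pow_le_pow_iff_left₀ (by positivity) (by positivity) two_ne_zero).1 ?_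
  rw [mul_pow, hnorm]
  nlinarith

theorem pointwise_monotonicity_inequality_general (N : ℕ) (α : ℝ) (hα : 0 < α) (κ : ℂ)
    (hκ : -κ.im ≥ α / (2 * Real.sqrt (α + 1)) * |κ.re|) (u : ℂ)
    (w : Fin N → ℂ) :
    (Complex.I * κ *
        ((((α + 2) / 2 : ℝ) : ℂ) * ((‖u‖ ^ α : ℝ) : ℂ) *
            ((∑ j, ‖w j‖ ^ 2 : ℝ) : ℂ) +
          ((α / 2 : ℝ) : ℂ) * ((‖u‖ ^ (α - 2) : ℝ) : ℂ) * u ^ 2 *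
            ∑ j, (conj (w j)) ^ 2)).re ≥
      (-((α + 2) / 2) * κ.im - α / 2 * ‖κ‖) * ‖u‖ ^ α *
        (∑ j, ‖w j‖ ^ 2) ∧
    (-((α + 2) / 2) * κ.im - α / 2 * ‖κ‖) * ‖u‖ ^ α *
        (∑ j, ‖w j‖ ^ 2) ≥ 0 := by
  set S := ∑ j, ‖w j‖ ^ 2
  have hS : 0 ≤ S := Finset.sum_nonneg fun j _ => sq_nonneg _
  have hu_pow : 0 ≤ ‖u‖ ^ α := Real.rpow_nonneg (norm_nonneg u) α
  have hB := norm_rpow_sub_two_mul_sq_mul_sum_conj_sq_le hα u w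
  have hC : 0 ≤ -((α + 2) / 2) * κ.im - α / 2 * ‖κ‖ := by
    linarith [mul_norm_le_of_abs_re_le hα.le hκ]
  refine ⟨?_, by positivity⟩
  calc (-((α + 2) / 2) * κ.im - α / 2 * ‖κ‖) * ‖u‖ ^ α * S
      = -κ.im * ((α + 2) / 2 * ‖u‖ ^ α * S) - ‖κ‖ * (α / 2 * ‖u‖ ^ α * S) := by ring
    _ ≤ _ := Complex.neg_im_mul_sub_norm_mul_le_re_I_mul κ _ _ _ hB
    _ = _ := by push_cast; ring_nf

/-- Key pointwise inequality: if `-Im κ ≥ (α/(2√(α+1)))|Re κ|`, then for `u ≠ 0` and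
`w ∈ ℂᴺ`, `Re[iκ(((α+2)/2)|u|^α|w|² + (α/2)|u|^{α-2}u² w̄·w̄)]
  ≥ (-(α+2)/2·Im κ - (α/2)|κ|)|u|^α|w|² ≥ 0`. -/
theorem pointwise_monotonicity_inequality (N : ℕ) (α : ℝ) (hα : 0 < α) (κ : ℂ)
    (hκ : -κ.im ≥ α / (2 * Real.sqrt (α + 1)) * |κ.re|) (u : ℂ) (hu : u ≠ 0)
    (w : Fin N → ℂ) :
    (Complex.I * κ *
        ((((α + 2) / 2 : ℝ) : ℂ) * ((‖u‖ ^ α : ℝ) : ℂ) *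
            ((∑ j, ‖w j‖ ^ 2 : ℝ) : ℂ) +
          ((α / 2 : ℝ) : ℂ) * ((‖u‖ ^ (α - 2) : ℝ) : ℂ) * u ^ 2 *
            ∑ j, (conj (w j)) ^ 2)).re ≥
      (-((α + 2) / 2) * κ.im - α / 2 * ‖κ‖) * ‖u‖ ^ α *
        (∑ j, ‖w j‖ ^ 2) ∧
    (-((α + 2) / 2) * κ.im - α / 2 * ‖κ‖) * ‖u‖ ^ α *
        (∑ j, ‖w j‖ ^ 2) ≥ 0 :=
  pointwise_monotonicity_inequality_general N α hα κ hκ u w
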